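/- For any partition λ of n, the number of distinct partitions reachable from λ in LCTR (i.e., obtainable from λ by one or more applications of the moves L and T, including the empty partition) is at most n. -/

import Mathlib

/-- Remove the left column of a Young diagram: subtract 1 from each part and
omit nonpositive values. -/
def leftCol (l : List ℕ) : List ℕ := (l.map (· - 1)).filter (0 < ·)

/-- Remove the top row of a Young diagram. -/
def topRow (l : List ℕ) : List ℕ := l.tail

/-- Minimum excluded value of a set of naturals. -/
noncomputable def mex (s : Set ℕ) : ℕ := sInf {n | n ∉ s}

def wt (l : List ℕ) : ℕ := l.sum + l.length

lemma wt_leftCol_le (l : List ℕ) : wt (leftCol l) ≤ l.sum := by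
  induction l with
  | nil => simp [leftCol, wt]
  | cons a t ih =>
    simp only [leftCol, wt] at ih ⊢
    rw [List.map_cons, List.filter_cons]
    by_cases h : 0 < a - 1
    · simp only [h, decide_true, if_true, List.sum_cons, List.length_cons]
      omega
    · simp only [h, decide_false, Bool.false_eq_true, if_false, List.sum_cons]
      omega

lemma wt_leftCol_lt (l : List ℕ) (h : l ≠ []) : wt (leftCol l) < wt l := by
  have h1 := wt_leftCol_le l
  have h2 : 0 < l.length := List.length_pos_iff.mpr h
  unfold wt at *
  omega

lemma wt_topRow_lt (l : List ℕ) (h : l ≠ []) : wt (topRow l) < wt l := by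
  cases l with
  | nil => exact absurd rfl h
  | cons a t => simp [topRow, wt]; omega

/-- The Sprague–Grundy value of a position in the LCTR game. -/
noncomputable def SG (l : List ℕ) : ℕ :=
  if h : l = [] then 0
  else mex {SG (leftCol l), SG (topRow l)}
termination_by wt l
decreasing_by
  · exact wt_leftCol_lt l h
  · exact wt_topRow_lt l h

/-- A partition: a non-increasing list of positive integers. -/
def IsPartition (l : List ℕ) : Prop := l.Pairwise (· ≥ ·) ∧ ∀ x ∈ l, 0 < x

/-- The conjugate partition: the `j`-th part (for `1 ≤ j ≤ l₁`) is the number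
of parts of `l` that are at least `j`. -/
def conj (l : List ℕ) : List ℕ :=
  (List.range (l.headD 0)).map (fun j => l.countP (fun x => decide (j < x)))

/-- One move in LCTR: remove the left column or the top row of a nonempty partition. -/
def Move (l m : List ℕ) : Prop := l ≠ [] ∧ (m = leftCol l ∨ m = topRow l)

/-- `m` is reachable from `l` by one or more moves of LCTR. -/
def Reachable (l m : List ℕ) : Prop := Relation.TransGen Move l m

/-!
Every position reachable from `l` is `leftCol^[a] (l.drop b)` for some `(b, a) ≠ (0, 0)`, since
removing the top row commutes with removing the left column. When this position is nonempty,
`(b, a)` is a cell of the Young diagram of `l`, and `n` cells minus the corner `(0, 0)`, together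
with the empty partition, give at most `n` positions.
-/

lemma leftCol_cons_of_one_lt {a : ℕ} (t : List ℕ) (ha : 1 < a) :
    leftCol (a :: t) = (a - 1) :: leftCol t := by
  simp [leftCol, Nat.sub_pos_of_lt ha]

lemma leftCol_eq_nil {l : List ℕ} (h : ∀ x ∈ l, x ≤ 1) : leftCol l = [] := by
  simp only [leftCol, List.filter_eq_nil_iff, List.mem_map]
  rintro _ ⟨y, hy, rfl⟩
  simpa using h y hy

lemma iterate_leftCol_nil (a : ℕ) : leftCol^[a] [] = [] :=
  Function.iterate_fixed rfl a

namespace IsPartition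

variable {l : List ℕ}

lemma le_head {a : ℕ} {t : List ℕ} (h : IsPartition (a :: t)) {x : ℕ} (hx : x ∈ a :: t) :
    x ≤ a := by
  rcases List.mem_cons.mp hx with rfl | hx
  · exact le_rfl
  · exact (List.pairwise_cons.mp h.1).1 x hx

lemma leftCol_cons_of_le_one {a : ℕ} {t : List ℕ} (h : IsPartition (a :: t)) (ha : a ≤ 1) :
    leftCol (a :: t) = [] :=
  leftCol_eq_nil fun _ hx => (h.le_head hx).trans ha

lemma eq_nil_iff_headD_eq_zero (h : IsPartition l) : l = [] ↔ l.headD 0 = 0 := by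
  cases l with
  | nil => simp
  | cons a t => simpa using (h.2 a List.mem_cons_self).ne'

lemma drop (h : IsPartition l) (b : ℕ) : IsPartition (l.drop b) :=
  ⟨h.1.sublist (List.drop_sublist b l), fun x hx => h.2 x (List.mem_of_mem_drop hx)⟩

lemma leftCol (h : IsPartition l) : IsPartition (_root_.leftCol l) := by
  have hmap : (l.map (· - 1)).Pairwise (· ≥ ·) :=
    h.1.map _ fun _ _ hab => Nat.sub_le_sub_right hab 1
  refine ⟨hmap.filter _, fun x hx => ?_⟩
  simpa [_root_.leftCol] using (List.mem_filter.mp hx).2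

lemma iterate_leftCol (h : IsPartition l) (a : ℕ) : IsPartition (_root_.leftCol^[a] l) := by
  induction a with
  | zero => exact h
  | succ a ih => simpa only [Function.iterate_succ_apply'] using ih.leftCol

lemma headD_leftCol (h : IsPartition l) : (_root_.leftCol l).headD 0 = l.headD 0 - 1 := by
  cases l with
  | nil => rfl
  | cons a t =>
    by_cases ha : 1 < a
    · simp [leftCol_cons_of_one_lt t ha]
    · simp [h.leftCol_cons_of_le_one (not_lt.mp ha), Nat.sub_eq_zero_of_le (not_lt.mp ha)]

lemma headD_iterate_leftCol (h : IsPartition l) (a : ℕ) :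
    (_root_.leftCol^[a] l).headD 0 = l.headD 0 - a := by
  induction a with
  | zero => rfl
  | succ a ih =>
    rw [Function.iterate_succ_apply', (h.iterate_leftCol a).headD_leftCol, ih, Nat.sub_sub]

lemma lt_headD_of_iterate_leftCol_ne_nil (h : IsPartition l) {a : ℕ}
    (hne : _root_.leftCol^[a] l ≠ []) : a < l.headD 0 := by
  rw [Ne, (h.iterate_leftCol a).eq_nil_iff_headD_eq_zero, h.headD_iterate_leftCol] at hne
  omega

lemma topRow_leftCol (h : IsPartition l) :
    topRow (_root_.leftCol l) = _root_.leftCol (topRow l) := by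
  cases l with
  | nil => rfl
  | cons a t =>
    by_cases ha : 1 < a
    · simp [topRow, leftCol_cons_of_one_lt t ha]
    · rw [h.leftCol_cons_of_le_one (not_lt.mp ha), topRow, topRow, List.tail_cons,
        leftCol_eq_nil fun _ hx => (h.le_head (List.mem_cons_of_mem a hx)).trans (not_lt.mp ha)]
      rfl

lemma topRow_iterate_leftCol (h : IsPartition l) (a : ℕ) :
    topRow (_root_.leftCol^[a] l) = _root_.leftCol^[a] (topRow l) := by
  induction a with
  | zero => rfl
  | succ a ih =>
    rw [Function.iterate_succ_apply', (h.iterate_leftCol a).topRow_leftCol, ih,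
      Function.iterate_succ_apply']

end IsPartition

lemma not_reachable_nil (m : List ℕ) : ¬Reachable [] m := by
  intro h
  induction h with
  | single hm => exact hm.1 rfl
  | tail _ _ ih => exact ih

/-- The part of the Young diagram of `l` weakly south-east of the cell in row `p.1`,
column `p.2` (both counted from `0`). -/
def subdiagram (l : List ℕ) (p : (_ : ℕ) × ℕ) : List ℕ := leftCol^[p.2] (l.drop p.1)

lemma IsPartition.exists_subdiagram_of_reachable {l m : List ℕ} (hl : IsPartition l)
    (h : Reachable l m) : ∃ p, p ≠ ⟨0, 0⟩ ∧ m = subdiagram l p := by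
  induction h with
  | single hm =>
    rcases hm.2 with rfl | rfl
    · exact ⟨⟨0, 1⟩, by simp, rfl⟩
    · exact ⟨⟨1, 0⟩, by simp, by simp [subdiagram, topRow, List.drop_one]⟩
  | tail _ hm ih =>
    obtain ⟨⟨b, a⟩, -, rfl⟩ := ih
    rcases hm.2 with rfl | rfl
    · exact ⟨⟨b, a + 1⟩, by simp, (Function.iterate_succ_apply' _ _ _).symm⟩
    · refine ⟨⟨b + 1, a⟩, by simp, ?_⟩
      rw [subdiagram, (hl.drop b).topRow_iterate_leftCol, topRow, List.tail_drop]
      rfl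

/-- The cells of the Young diagram of `l`, as pairs (row, column). -/
def cells (l : List ℕ) : Finset ((_ : ℕ) × ℕ) :=
  (Finset.range l.length).sigma fun b => Finset.range ((l.drop b).headD 0)

lemma card_cells (l : List ℕ) : (cells l).card = l.sum := by
  simp only [cells, Finset.card_sigma, Finset.card_range]
  induction l with
  | nil => rfl
  | cons a t ih =>
    simp only [List.length_cons, Finset.sum_range_succ', List.drop_succ_cons, List.drop_zero,
      List.headD_cons, List.sum_cons, ih]
    omega

lemma IsPartition.subdiagram_mem_cells {l : List ℕ} (hl : IsPartition l) {p : (_ : ℕ) × ℕ}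
    (hp : subdiagram l p ≠ []) : p ∈ cells l := by
  have hdrop : l.drop p.1 ≠ [] := fun e => hp (by rw [subdiagram, e, iterate_leftCol_nil])
  simp only [cells, Finset.mem_sigma, Finset.mem_range]
  exact ⟨by simpa using hdrop, (hl.drop p.1).lt_headD_of_iterate_leftCol_ne_nil hp⟩

lemma IsPartition.reachable_subset {l : List ℕ} (hl : IsPartition l) :
    {m | Reachable l m} ⊆ insert [] ↑(((cells l).erase ⟨0, 0⟩).image (subdiagram l)) := by
  intro m hm
  obtain ⟨p, hp0, rfl⟩ := hl.exists_subdiagram_of_reachable hm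
  by_cases hp : subdiagram l p = []
  · exact Or.inl hp
  · exact Or.inr <| Finset.mem_image_of_mem _ <|
      Finset.mem_erase.mpr ⟨hp0, hl.subdiagram_mem_cells hp⟩

/-- For any partition of `n`, at most `n` distinct partitions are reachable
from it in LCTR. -/
theorem reachable_card_le (n : ℕ) (l : List ℕ) (hl : IsPartition l)
    (hsum : l.sum = n) :
    {m : List ℕ | Reachable l m}.Finite ∧
    {m : List ℕ | Reachable l m}.ncard ≤ n := by
  rcases eq_or_ne l [] with rfl | hne
  · simp [not_reachable_nil]
  have hfin := (Finset.finite_toSet (((cells l).erase ⟨0, 0⟩).image (subdiagram l))).insert []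
  have hcorner : ⟨0, 0⟩ ∈ cells l := hl.subdiagram_mem_cells (by simpa [subdiagram] using hne)
  have hpos : 0 < n := hsum ▸ card_cells l ▸ Finset.card_pos.mpr ⟨_, hcorner⟩
  refine ⟨hfin.subset hl.reachable_subset, ?_⟩
  calc {m | Reachable l m}.ncard
      ≤ (((cells l).erase ⟨0, 0⟩).image (subdiagram l)).card + 1 := by
        grw [Set.ncard_le_ncard hl.reachable_subset hfin, Set.ncard_insert_le,
          Set.ncard_coe_finset]
    _ ≤ ((cells l).erase ⟨0, 0⟩).card + 1 := by grw [Finset.card_image_le]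
    _ = n := by rw [Finset.card_erase_of_mem hcorner, card_cells, hsum, Nat.sub_add_cancel hpos]
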